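/- arXiv:1309.1835 — 2 statements merged into one kernel-verified Lean document; each statement's English description precedes it below -/
import Mathlib

section
/- Let G and G' be two finite simple graphs on the same vertex set having the same 3-element homogeneous subsets, and let U be the Boolean sum of G and G'. If U contains no triangle (no 3-element cycle), then every connected component of U is a cycle of even length or a path; in particular, U is bipartite. -/
open SimpleGraph

/-- The Boolean sum `G ∔ G'`: edges are the symmetric difference of the edge sets. -/
def booleanSum {V : Type*} (G G' : SimpleGraph V) : SimpleGraph V where
  Adj x y := (G.Adj x y ∧ ¬ G'.Adj x y) ∨ (G'.Adj x y ∧ ¬ G.Adj x y)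
  symm := by
    constructor
    rintro x y (⟨h1, h2⟩ | ⟨h1, h2⟩)
    · exact Or.inl ⟨h1.symm, fun h => h2 h.symm⟩
    · exact Or.inr ⟨h1.symm, fun h => h2 h.symm⟩
  loopless := by
    constructor
    rintro x (⟨h, -⟩ | ⟨h, -⟩)
    · exact G.loopless.irrefl x h
    · exact G'.loopless.irrefl x h
/-- Two graphs on the same vertex set have the same 3-element homogeneous subsets:
a 3-element set is a clique or an independent set of `G` iff it is one of `G'`. -/
def SameHomog3 {V : Type*} (G G' : SimpleGraph V) : Prop :=
  ∀ s : Finset V, s.card = 3 →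
    ((G.IsClique ↑s ∨ Gᶜ.IsClique ↑s) ↔ (G'.IsClique ↑s ∨ G'ᶜ.IsClique ↑s))
/-- A graph is bipartite if its vertex set can be partitioned into two independent sets. -/
def IsBipartite {W : Type*} (H : SimpleGraph W) : Prop :=
  ∃ A B : Set W, A ∪ B = Set.univ ∧ A ∩ B = ∅ ∧
    (∀ x ∈ A, ∀ y ∈ A, ¬ H.Adj x y) ∧ (∀ x ∈ B, ∀ y ∈ B, ¬ H.Adj x y)
/-- The connected component `c` of `G` induces a cycle of even length or a path. -/
def CompIsEvenCycleOrPath {V : Type*} (G : SimpleGraph V) (c : G.ConnectedComponent) : Prop :=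
  (∃ n, 3 ≤ n ∧ Even n ∧ Nonempty (G.induce c.supp ≃g cycleGraph n)) ∨
  (∃ n, Nonempty (G.induce c.supp ≃g pathGraph n))

/-!
If `xy` and `xz` are edges of `U = G ∔ G'` lying both in `G` or both in `G'`, then `yz` is not an
edge of the triangle-free `U`, so `G` and `G'` agree on `yz` and disagree on `xy` and `xz`: exactly
one of them makes `{x, y, z}` homogeneous. Hence `U` is the union of two edge-disjoint matchings,
given by two involutions `A` and `B`. Applying `A, B, A, B, …` to a vertex walks through its
component: from a fixed point of `A` or `B` it runs along a path, and if there is none it closes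
up into a cycle whose edges alternate between the two matchings, so the cycle is even. Paths and
even cycles are 2-colourable, so `U` is bipartite.
-/

open Function

variable {V : Type*}

namespace SimpleGraph

variable {U : SimpleGraph V}

theorem mem_of_reachable_of_adj_closed {S : Set V}
    (hS : ∀ x ∈ S, ∀ y, U.Adj x y → y ∈ S) {x y : V} (hx : x ∈ S) (h : U.Reachable x y) :
    y ∈ S := by
  obtain ⟨p⟩ := h
  induction p with
  | nil => exact hx
  | cons hadj _ ih => exact ih (hS _ hx _ hadj)

theorem nonempty_induce_supp_iso {W : Type*} {H : SimpleGraph W} (hH : H.Preconnected)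
    {φ : W → V} (hφ : Injective φ) (hadj : ∀ a b, U.Adj (φ a) (φ b) ↔ H.Adj a b)
    (hcl : ∀ a y, U.Adj (φ a) y → y ∈ Set.range φ) (a : W) :
    Nonempty (U.induce (U.connectedComponentMk (φ a)).supp ≃g H) := by
  let f : H →g U := ⟨φ, (hadj _ _).2⟩
  have hsupp : ∀ y, y ∈ (U.connectedComponentMk (φ a)).supp ↔ y ∈ Set.range φ := by
    intro y
    rw [ConnectedComponent.mem_supp_iff, ConnectedComponent.eq]
    constructor
    · intro h
      refine mem_of_reachable_of_adj_closed ?_ ⟨a, rfl⟩ h.symm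
      rintro _ ⟨b, rfl⟩ y hy
      exact hcl b y hy
    · rintro ⟨b, rfl⟩
      exact ((hH a b).map f).symm
  let e : W ≃ (U.connectedComponentMk (φ a)).supp :=
    Equiv.ofBijective (fun b => ⟨φ b, (hsupp _).2 ⟨b, rfl⟩⟩)
      ⟨fun b c h => hφ (congrArg Subtype.val h), fun ⟨y, hy⟩ => by
        obtain ⟨b, rfl⟩ := (hsupp y).1 hy
        exact ⟨b, rfl⟩⟩
  exact ⟨(⟨e, fun {b c} => hadj b c⟩ : H ≃g _).symm⟩

open Fin.NatCast Fin.CommRing in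
theorem nonempty_induce_supp_iso_cycleGraph {g : ℕ → V} {p : ℕ} (hp : 3 ≤ p)
    (hnb : ∀ k y, U.Adj (g (k + 1)) y ↔ g (k + 1) ≠ y ∧ (g k = y ∨ g (k + 2) = y))
    (hper : Periodic g p) (hinj : Set.InjOn g (Set.Iio p)) :
    Nonempty (U.induce (U.connectedComponentMk (g 0)).supp ≃g cycleGraph p) := by
  obtain ⟨m, rfl⟩ : ∃ m, p = m + 2 := ⟨p - 2, by omega⟩
  have heq : ∀ k l : ℕ, g k = g l ↔ (k : Fin (m + 2)) = l := by
    intro k l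
    rw [← hper.map_mod_nat k, ← hper.map_mod_nat l, Fin.ext_iff, Fin.val_natCast,
      Fin.val_natCast]
    exact hinj.eq_iff (Nat.mod_lt _ (by omega)) (Nat.mod_lt _ (by omega))
  have hnb' : ∀ k y, U.Adj (g k) y ↔ g k ≠ y ∧ (g (k + (m + 1)) = y ∨ g (k + 1) = y) := by
    intro k y
    have := hnb (k + (m + 1)) y
    rwa [show k + (m + 1) + 1 = k + (m + 2) by omega, hper,
      show k + (m + 1) + 2 = k + 1 + (m + 2) by omega, hper] at this
  have hneg : (m : Fin (m + 2)) + 1 = -1 := by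
    have := Fin.natCast_self (m + 2)
    push_cast at this ⊢
    linear_combination this
  have hadj : ∀ a b : Fin (m + 2), U.Adj (g a) (g b) ↔ (cycleGraph (m + 2)).Adj a b := by
    intro a b
    rw [hnb', cycleGraph_adj, ne_eq, heq, heq, heq]
    push_cast [Fin.cast_val_eq_self]
    rw [hneg]
    constructor
    · rintro ⟨-, h | h⟩
      · exact Or.inl (by linear_combination h)
      · exact Or.inr (by linear_combination -h)
    · rintro (h | h)
      · exact ⟨fun hab => by simp [hab] at h, Or.inl (by linear_combination h)⟩
      · exact ⟨fun hab => by simp [hab] at h, Or.inr (by linear_combination -h)⟩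
  have hcl : ∀ (a : Fin (m + 2)) y, U.Adj (g a) y → y ∈ Set.range fun b : Fin (m + 2) => g b := by
    intro a y hy
    obtain ⟨-, rfl | rfl⟩ := (hnb' a y).1 hy <;>
      exact ⟨_, (heq _ _).2 (Fin.cast_val_eq_self _)⟩
  simpa using nonempty_induce_supp_iso cycleGraph_preconnected
    (fun a b h => by simpa using (heq a b).1 h) hadj hcl 0

/-- The path is `g 1, …, g n`; repeating its end vertices as `g 0` and `g (n + 1)` makes the
neighbourhood condition `hnb` uniform along it. -/
theorem nonempty_induce_supp_iso_pathGraph {g : ℕ → V} {n : ℕ} (hn : 0 < n)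
    (hnb : ∀ k y, U.Adj (g (k + 1)) y ↔ g (k + 1) ≠ y ∧ (g k = y ∨ g (k + 2) = y))
    (hstart : g 0 = g 1) (hend : g n = g (n + 1)) (hinj : Set.InjOn g (Set.Icc 1 n)) :
    Nonempty (U.induce (U.connectedComponentMk (g 1)).supp ≃g pathGraph n) := by
  have hclamp : ∀ k ≤ n + 1, g k = g (max 1 (min k n)) := by
    intro k hk
    rcases Nat.eq_zero_or_pos k with rfl | hk0
    · simpa using hstart
    rcases hk.lt_or_eq with hk | rfl
    · rw [min_eq_left (by omega), max_eq_right hk0]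
    · rw [min_eq_right (by omega), max_eq_right hn, hend]
  have heq : ∀ k ≤ n + 1, ∀ l ≤ n + 1, g k = g l ↔ max 1 (min k n) = max 1 (min l n) := by
    intro k hk l hl
    rw [hclamp k hk, hclamp l hl]
    exact hinj.eq_iff ⟨by omega, by omega⟩ ⟨by omega, by omega⟩
  have hmem : ∀ k ≤ n + 1, g k ∈ Set.range fun b : Fin n => g (b + 1) := fun k hk =>
    ⟨⟨max 1 (min k n) - 1, by omega⟩, (heq (max 1 (min k n) - 1 + 1) (by omega) k hk).2 (by omega)⟩
  have hadj : ∀ a b : Fin n, U.Adj (g (a + 1)) (g (b + 1)) ↔ (pathGraph n).Adj a b := by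
    intro a b
    rw [hnb, pathGraph_adj, ne_eq, heq _ (by omega) _ (by omega), heq _ (by omega) _ (by omega),
      heq _ (by omega) _ (by omega)]
    omega
  have hcl : ∀ (a : Fin n) y, U.Adj (g (a + 1)) y → y ∈ Set.range fun b : Fin n => g (b + 1) := by
    intro a y hy
    obtain ⟨-, rfl | rfl⟩ := (hnb a y).1 hy
    exacts [hmem _ (by omega), hmem _ (by omega)]
  exact nonempty_induce_supp_iso (pathGraph_preconnected n)
    (fun a b h => Fin.ext (by simpa using (heq _ (by omega) _ (by omega)).1 h)) hadj hcl ⟨0, hn⟩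

end SimpleGraph

section Alternating

variable (A B : V → V)

def altMap (k : ℕ) : V → V := if Even k then A else B

def altSeq (v : V) : ℕ → V
  | 0 => v
  | k + 1 => altMap A B k (altSeq v k)

variable {A B}

theorem altMap_succ (k : ℕ) : altMap A B (k + 1) = altMap B A k := by
  by_cases h : Even k <;> simp [altMap, h, Nat.even_add_one]

theorem altMap_congr {m n : ℕ} (h : m % 2 = n % 2) : altMap A B m = altMap A B n := by
  simp only [altMap, Nat.even_iff, h]

theorem or_iff_altMap (k : ℕ) (x y : V) :
    (A x = y ∨ B x = y) ↔ (altMap A B k x = y ∨ altMap A B (k + 1) x = y) := by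
  by_cases h : Even k <;> simp [altMap, h, Nat.even_add_one, or_comm]

theorem involutive_altMap (hA : Involutive A) (hB : Involutive B) (k : ℕ) :
    Involutive (altMap A B k) := by
  unfold altMap
  split_ifs
  exacts [hA, hB]

theorem altMap_altSeq_succ (hA : Involutive A) (hB : Involutive B) (v : V) (k : ℕ) :
    altMap A B k (altSeq A B v (k + 1)) = altSeq A B v k :=
  involutive_altMap hA hB k _

theorem altSeq_succ_eq_altSeq_swap (v : V) (k : ℕ) :
    altSeq A B v (k + 1) = altSeq B A (A v) k := by
  induction k with
  | zero => rfl
  | succ k ih => rw [altSeq, ih, altMap_succ]; rfl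

variable {U : SimpleGraph V}

theorem reachable_altSeq (hU : ∀ x y, U.Adj x y ↔ x ≠ y ∧ (A x = y ∨ B x = y)) (v : V)
    (k : ℕ) : U.Reachable v (altSeq A B v k) := by
  induction k with
  | zero => rfl
  | succ k ih =>
    refine ih.trans ?_
    by_cases h : altSeq A B v k = altSeq A B v (k + 1)
    · rw [h]
    · exact ((hU _ _).2 ⟨h, (or_iff_altMap k _ _).2 (Or.inl rfl)⟩).reachable

theorem adj_altSeq_succ_iff (hA : Involutive A) (hB : Involutive B)
    (hU : ∀ x y, U.Adj x y ↔ x ≠ y ∧ (A x = y ∨ B x = y)) (v : V) (k : ℕ) (y : V) :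
    U.Adj (altSeq A B v (k + 1)) y ↔
      altSeq A B v (k + 1) ≠ y ∧ (altSeq A B v k = y ∨ altSeq A B v (k + 2) = y) := by
  rw [hU, or_iff_altMap k, altMap_altSeq_succ hA hB]
  rfl

theorem exists_first_repeat [Finite V] (g : ℕ → V) :
    ∃ i j, i < j ∧ g i = g j ∧ Set.InjOn g (Set.Iio j) := by
  classical
  have hex : ∃ j, ∃ i < j, g i = g j := by
    obtain ⟨a, b, hab, h⟩ := Finite.exists_ne_map_eq_of_infinite g
    rcases hab.lt_or_gt with hab | hab
    exacts [⟨b, a, hab, h⟩, ⟨a, b, hab, h.symm⟩]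
  obtain ⟨i, hij, heq⟩ := Nat.find_spec hex
  refine ⟨i, Nat.find hex, hij, heq, fun a ha b hb hab => ?_⟩
  by_contra hne
  rcases Ne.lt_or_gt hne with h | h
  · exact Nat.find_min hex hb ⟨a, h, hab⟩
  · exact Nat.find_min hex ha ⟨b, h, hab.symm⟩

/-- Stepping back from a repeat `i < j` with `j - i` even, or inwards with `j - i` odd, gives an
earlier or closer repeat. -/
theorem altSeq_first_repeat (hA : Involutive A) (hB : Involutive B) {v : V} {i j : ℕ}
    (hij : i < j) (heq : altSeq A B v i = altSeq A B v j)
    (hinj : Set.InjOn (altSeq A B v) (Set.Iio j)) : j = i + 1 ∨ (i = 0 ∧ Even j) := by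
  obtain ⟨j, rfl⟩ : ∃ j', j = j' + 1 := ⟨j - 1, by omega⟩
  have hback : altSeq A B v j = altMap A B j (altSeq A B v i) := by
    rw [heq, altMap_altSeq_succ hA hB]
  rcases Nat.even_or_odd (j + 1 - i) with hev | hodd
  · right
    obtain rfl : i = 0 := by
      by_contra hi
      obtain ⟨i, rfl⟩ := Nat.exists_eq_succ_of_ne_zero hi
      rw [Nat.even_iff] at hev
      have : altSeq A B v i = altSeq A B v j := by
        rw [hback, ← altMap_altSeq_succ hA hB v i, altMap_congr (m := i) (n := j) (by omega)]
      exact absurd (hinj (Set.mem_Iio.2 (by omega)) (Set.mem_Iio.2 (by omega)) this) (by omega)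
    exact ⟨rfl, by simpa using hev⟩
  · rw [Nat.odd_iff] at hodd
    left
    by_contra hne
    have : altSeq A B v (i + 1) = altSeq A B v j := by
      rw [hback, altMap_congr (m := j) (n := i) (by omega)]
      rfl
    have := hinj (Set.mem_Iio.2 (by omega)) (Set.mem_Iio.2 (by omega)) this
    omega

theorem exists_iso_cycleGraph_of_involutive [Finite V] (hA : Involutive A) (hB : Involutive B)
    (hU : ∀ x y, U.Adj x y ↔ x ≠ y ∧ (A x = y ∨ B x = y)) (hAB : ∀ x, A x = B x → A x = x)
    {v : V} (hfix : ∀ w, U.Reachable v w → A w ≠ w ∧ B w ≠ w) :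
    ∃ p, 3 ≤ p ∧ Even p ∧ Nonempty (U.induce (U.connectedComponentMk v).supp ≃g cycleGraph p) := by
  let g := altSeq A B v
  have hstep : ∀ k, g k ≠ g (k + 1) := by
    intro k h
    have hfix' := hfix _ (reachable_altSeq hU v k)
    rcases (or_iff_altMap k (g k) (g (k + 1))).2 (Or.inl rfl) with h' | h'
    exacts [hfix'.1 (h'.trans h.symm), hfix'.2 (h'.trans h.symm)]
  obtain ⟨i, p, hip, heq, hinj⟩ := exists_first_repeat g
  obtain ⟨rfl, hev⟩ := (altSeq_first_repeat hA hB hip heq hinj).resolve_left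
    fun h => hstep i (h ▸ heq)
  have hp2 : p ≠ 2 := by
    rintro rfl
    have hBA : B (A v) = v := heq.symm
    refine (hfix v (.refl v)).1 (hAB v ?_)
    calc A v = B (B (A v)) := (hB _).symm
      _ = B v := by rw [hBA]
  have hpar : p % 2 = 0 := Nat.even_iff.1 hev
  have hper : Periodic g p := by
    intro k
    induction k with
    | zero => simpa using heq.symm
    | succ k ih =>
      rw [Nat.add_right_comm]
      change altMap A B (k + p) (g (k + p)) = altMap A B k (g k)
      rw [ih, altMap_congr (m := k + p) (n := k) (by omega)]
  exact ⟨p, by omega, hev, nonempty_induce_supp_iso_cycleGraph (by omega)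
    (adj_altSeq_succ_iff hA hB hU v) hper hinj⟩

theorem exists_iso_pathGraph_of_involutive [Finite V] (hA : Involutive A) (hB : Involutive B)
    (hU : ∀ x y, U.Adj x y ↔ x ≠ y ∧ (A x = y ∨ B x = y)) {v : V} (hv : B v = v) :
    ∃ n, Nonempty (U.induce (U.connectedComponentMk v).supp ≃g pathGraph n) := by
  obtain ⟨i, j, hij, heq, hinj⟩ := exists_first_repeat (altSeq A B v)
  obtain rfl : j = i + 1 := by
    refine (altSeq_first_repeat hA hB hij heq hinj).resolve_right ?_
    rintro ⟨rfl, hev⟩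
    obtain ⟨j, rfl⟩ : ∃ j', j = j' + 1 := ⟨j - 1, by omega⟩
    rw [Nat.even_iff] at hev
    have : altSeq A B v j = altSeq A B v 0 := by
      rw [← altMap_altSeq_succ hA hB v j, ← heq, altMap_congr (m := j) (n := 1) (by omega)]
      exact hv
    exact absurd (hinj (Set.mem_Iio.2 (by omega)) (Set.mem_Iio.2 (by omega)) this) (by omega)
  have hshift : ∀ k, altSeq B A v (k + 1) = altSeq A B v k := fun k => by
    rw [altSeq_succ_eq_altSeq_swap, hv]
  have hU' : ∀ x y, U.Adj x y ↔ x ≠ y ∧ (B x = y ∨ A x = y) := fun x y =>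
    (hU x y).trans (and_congr_right' or_comm)
  have hinj' : Set.InjOn (altSeq B A v) (Set.Icc 1 (i + 1)) := by
    rintro (_ | a) ha (_ | b) hb h
    all_goals simp only [Set.mem_Icc] at ha hb
    · rfl
    · omega
    · omega
    rw [hshift, hshift] at h
    rw [hinj (Set.mem_Iio.2 (by omega)) (Set.mem_Iio.2 (by omega)) h]
  have := nonempty_induce_supp_iso_pathGraph (n := i + 1) (by omega)
    (adj_altSeq_succ_iff hB hA hU' v) (hshift 0).symm (by rw [hshift, hshift]; exact heq) hinj'
  exact ⟨i + 1, by rwa [hshift 0] at this⟩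

end Alternating

namespace SimpleGraph

variable {U M M' : SimpleGraph V}

theorem compIsEvenCycleOrPath_of_involutive [Finite V] {A B : V → V} (hA : Involutive A)
    (hB : Involutive B) (hU : ∀ x y, U.Adj x y ↔ x ≠ y ∧ (A x = y ∨ B x = y))
    (hAB : ∀ x, A x = B x → A x = x) (c : U.ConnectedComponent) : CompIsEvenCycleOrPath U c := by
  induction c using ConnectedComponent.ind with | h v => ?_
  by_cases hend : ∃ w, U.Reachable v w ∧ (A w = w ∨ B w = w)
  · obtain ⟨w, hvw, hw | hw⟩ := hend
    all_goals rw [ConnectedComponent.sound hvw]; right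
    · exact exists_iso_pathGraph_of_involutive hB hA
        (fun x y => (hU x y).trans (and_congr_right' or_comm)) hw
    · exact exists_iso_pathGraph_of_involutive hA hB hU hw
  · push Not at hend
    exact Or.inl (exists_iso_cycleGraph_of_involutive hA hB hU hAB hend)

noncomputable def mate (M : SimpleGraph V) (x : V) : V :=
  open Classical in if h : ∃ y, M.Adj x y then h.choose else x

theorem mate_adj {x : V} (h : ∃ y, M.Adj x y) : M.Adj x (mate M x) := by
  simpa only [mate, dif_pos h] using h.choose_spec

theorem mate_eq_self {x : V} (h : ¬∃ y, M.Adj x y) : mate M x = x := by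
  simp only [mate, dif_neg h]

theorem adj_iff_mate_eq (hM : ∀ x, (M.neighborSet x).Subsingleton) {x y : V} :
    M.Adj x y ↔ x ≠ y ∧ mate M x = y := by
  refine ⟨fun h => ⟨h.ne, hM x (mate_adj ⟨y, h⟩) h⟩, ?_⟩
  rintro ⟨hne, rfl⟩
  by_cases h : ∃ y, M.Adj x y
  · exact mate_adj h
  · exact absurd (mate_eq_self h).symm hne

theorem involutive_mate (hM : ∀ x, (M.neighborSet x).Subsingleton) : Involutive (mate M) := by
  intro x
  by_cases hx : x = mate M x
  · rw [← hx, ← hx]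
  · exact ((adj_iff_mate_eq hM).1 ((adj_iff_mate_eq hM).2 ⟨hx, rfl⟩).symm).2

theorem compIsEvenCycleOrPath_sup [Finite V] (hM : ∀ x, (M.neighborSet x).Subsingleton)
    (hM' : ∀ x, (M'.neighborSet x).Subsingleton) (hdisj : Disjoint M M')
    (c : (M ⊔ M').ConnectedComponent) : CompIsEvenCycleOrPath (M ⊔ M') c := by
  refine compIsEvenCycleOrPath_of_involutive (involutive_mate hM) (involutive_mate hM')
    (fun x y => ?_) (fun x hx => ?_) c
  · rw [sup_adj, adj_iff_mate_eq hM, adj_iff_mate_eq hM', and_or_left]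
  · by_contra hne
    have h := (adj_iff_mate_eq hM).2 ⟨Ne.symm hne, rfl⟩
    have h' := (adj_iff_mate_eq hM').2 ⟨Ne.symm hne, hx.symm⟩
    exact (hdisj.le_bot ⟨h, h'⟩ : (⊥ : SimpleGraph V).Adj _ _)

theorem isBipartite_of_coloring {W : Type*} {H : SimpleGraph W} (C : H.Coloring Bool) :
    _root_.IsBipartite H := by
  refine ⟨{w | C w = true}, {w | C w = false}, ?_, ?_, ?_, ?_⟩
  · ext w; cases C w <;> simp
  · ext w; simp +contextual
  all_goals exact fun x hx y hy hxy => C.valid hxy (hx.trans hy.symm)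

theorem isBipartite_of_forall_compIsEvenCycleOrPath
    (h : ∀ c : U.ConnectedComponent, CompIsEvenCycleOrPath U c) : _root_.IsBipartite U := by
  have hcol : U.Colorable 2 := colorable_iff_forall_connectedComponent.2 fun c => by
    rcases h c with ⟨n, -, hn, ⟨e⟩⟩ | ⟨n, ⟨e⟩⟩
    · exact (cycleGraph.bicoloring_of_even n hn).colorable.of_hom e.toHom
    · exact (pathGraph.bicoloring n).colorable.of_hom e.toHom
  obtain ⟨C⟩ := hcol
  exact isBipartite_of_coloring (U.recolorOfEquiv finTwoEquiv C)

end SimpleGraph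

theorem SameHomog3.adj_iff_not_adj {G G' : SimpleGraph V} (h : SameHomog3 G G')
    (htf : (booleanSum G G').CliqueFree 3) {x y z : V} (hxy : (booleanSum G G').Adj x y)
    (hxz : (booleanSum G G').Adj x z) (hyz : y ≠ z) : G.Adj x y ↔ ¬G.Adj x z := by
  classical
  have hyz' : ¬(booleanSum G G').Adj y z := fun h =>
    htf {x, y, z} (is3Clique_triple_iff.2 ⟨hxy, hxz, h⟩)
  have hs := h {x, y, z} (Finset.card_eq_three.2 ⟨x, y, z, hxy.ne, hxz.ne, hyz, rfl⟩)
  simp only [Finset.coe_insert, Finset.coe_singleton, isClique_insert, isClique_singleton,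
    Set.mem_insert_iff, Set.mem_singleton_iff, forall_eq_or_imp, forall_eq, compl_adj, ne_eq,
    hxy.ne, hxz.ne, hyz, not_false_eq_true, true_and, true_implies] at hs
  simp only [booleanSum] at hxy hxz hyz'
  tauto

theorem SameHomog3.subsingleton_neighborSet_inf {G G' : SimpleGraph V} (h : SameHomog3 G G')
    (htf : (booleanSum G G').CliqueFree 3) (x : V) :
    ((booleanSum G G' ⊓ G).neighborSet x).Subsingleton := by
  intro y hy z hz
  rw [mem_neighborSet, inf_adj] at hy hz
  by_contra hyz
  exact (h.adj_iff_not_adj htf hy.1 hz.1 hyz).1 hy.2 hz.2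

theorem SameHomog3.subsingleton_neighborSet_sdiff {G G' : SimpleGraph V} (h : SameHomog3 G G')
    (htf : (booleanSum G G').CliqueFree 3) (x : V) :
    ((booleanSum G G' \ G).neighborSet x).Subsingleton := by
  intro y hy z hz
  rw [mem_neighborSet, sdiff_adj] at hy hz
  by_contra hyz
  exact hy.2 ((h.adj_iff_not_adj htf hy.1 hz.1 hyz).2 hz.2)

/-- If `U` is the Boolean sum of two graphs with the same 3-element homogeneous subsets and
`U` contains no triangle, then every connected component of `U` is a cycle of even length or
a path; in particular `U` is bipartite. -/
theorem stmt_6 {V : Type} [Fintype V] (G G' : SimpleGraph V) (hsame : SameHomog3 G G')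
    (U : SimpleGraph V) (hU : U = booleanSum G G') (htf : U.CliqueFree 3) :
    (∀ c : U.ConnectedComponent, CompIsEvenCycleOrPath U c) ∧ _root_.IsBipartite U := by
  subst hU
  have hcomp : ∀ c, CompIsEvenCycleOrPath (booleanSum G G') c := by
    rw [← sup_inf_sdiff (booleanSum G G') G]
    exact compIsEvenCycleOrPath_sup (hsame.subsingleton_neighborSet_inf htf)
      (hsame.subsingleton_neighborSet_sdiff htf) disjoint_inf_sdiff
  exact ⟨hcomp, isBipartite_of_forall_compIsEvenCycleOrPath hcomp⟩
end

section
/- Let G and G' be two simple graphs on the same vertex set V and let U be the Boolean sum of G and G'. Then G and G' have the same 3-element homogeneous subsets if and only if both of the following hold: the sets A_1 := E(U) ∩ E(G) and A_2 := E(U) \ E(G) are independent sets of the edge-graph S(U) (and partition its vertex set), and the sets B_1 := E(complement of U) ∩ E(G) and B_2 := E(complement of U) \ E(G) are independent sets of the edge-graph S(complement of U) (and partition its vertex set). -/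
open SimpleGraph

/-- The edge-graph `S(U)`: vertices are edges of `U`; two edges `u = xy` and `v = xz`
(with `x, y, z` pairwise distinct) are adjacent iff `yz` is not an edge of `U`. -/
def edgeGraph {V : Type*} (U : SimpleGraph V) : SimpleGraph U.edgeSet where
  Adj u v := ∃ x y z : V, x ≠ y ∧ x ≠ z ∧ y ≠ z ∧
    (u : Sym2 V) = s(x, y) ∧ (v : Sym2 V) = s(x, z) ∧ ¬ U.Adj y z
  symm := by
    constructor
    rintro u v ⟨x, y, z, hxy, hxz, hyz, hu, hv, h⟩
    exact ⟨x, z, y, hxz, hxy, hyz.symm, hv, hu, fun h' => h h'.symm⟩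
  loopless := by
    constructor
    rintro u ⟨x, y, z, hxy, hxz, hyz, hu, hv, h⟩
    rw [hu, Sym2.eq_iff] at hv
    rcases hv with ⟨-, h1⟩ | ⟨h1, -⟩
    · exact hyz h1
    · exact hxz h1
/-!
Since `G' = G ∆ U`, on each triangle the adjacency pattern of `G'` is that of `G` with the
edges of `U` flipped. The triangle stays homogeneous (or stays inhomogeneous) when `U` contains
none or all of its edges; otherwise `U` or `Uᶜ` has an open wedge `x y, x z` at one apex, and the
triangle is homogeneous in exactly one of `G`, `G'` when `G` agrees on `x y` and `x z`, in
neither otherwise. Open wedges of `U` and `Uᶜ` are exactly the adjacencies of `S(U)` and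
`S(Uᶜ)`, so the condition says that `E(G)` splits every adjacent pair, i.e. that `A₁, A₂` and
`B₁, B₂` are independent.
-/

open scoped symmDiff

namespace SimpleGraph

variable {V : Type*}

lemma booleanSum_eq_symmDiff (G G' : SimpleGraph V) : booleanSum G G' = G ∆ G' := rfl

lemma symmDiff_adj (G H : SimpleGraph V) (x y : V) :
    (G ∆ H).Adj x y ↔ Xor (G.Adj x y) (H.Adj x y) := Iff.rfl

lemma isClique_or_compl_isClique_triple_iff (G : SimpleGraph V) {x y z : V} (hxy : x ≠ y)
    (hxz : x ≠ z) (hyz : y ≠ z) :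
    G.IsClique {x, y, z} ∨ Gᶜ.IsClique {x, y, z} ↔
      (G.Adj x y ↔ G.Adj x z) ∧ (G.Adj x y ↔ G.Adj y z) := by
  simp only [isClique_insert, isClique_singleton, Set.mem_insert_iff, Set.mem_singleton_iff,
    forall_eq_or_imp, forall_eq, compl_adj]
  by_cases a : G.Adj x y <;> by_cases b : G.Adj x z <;> by_cases c : G.Adj y z <;> simp_all

lemma sameHomog3_iff_forall_triangle (G G' : SimpleGraph V) :
    SameHomog3 G G' ↔ ∀ x y z, x ≠ y → x ≠ z → y ≠ z →
      (((G.Adj x y ↔ G.Adj x z) ∧ (G.Adj x y ↔ G.Adj y z)) ↔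
        ((G'.Adj x y ↔ G'.Adj x z) ∧ (G'.Adj x y ↔ G'.Adj y z))) := by
  classical
  constructor
  · intro h x y z hxy hxz hyz
    have := h {x, y, z} (Finset.card_eq_three.mpr ⟨x, y, z, hxy, hxz, hyz, rfl⟩)
    rwa [Finset.coe_insert, Finset.coe_pair, isClique_or_compl_isClique_triple_iff G hxy hxz hyz,
      isClique_or_compl_isClique_triple_iff G' hxy hxz hyz] at this
  · intro h s hs
    obtain ⟨x, y, z, hxy, hxz, hyz, rfl⟩ := Finset.card_eq_three.mp hs
    rw [Finset.coe_insert, Finset.coe_pair, isClique_or_compl_isClique_triple_iff G hxy hxz hyz,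
      isClique_or_compl_isClique_triple_iff G' hxy hxz hyz]
    exact h x y z hxy hxz hyz

/-- Read `a, b, c` as the edges `x y, x z, y z` of a triangle in `G` and `u, v, w` as those
in `U`; the three conjuncts on the right are the open wedges at the apexes `x`, `y`, `z`. -/
lemma homog_iff_homog_xor_iff (a b c u v w : Prop) :
    (((a ↔ b) ∧ (a ↔ c)) ↔ ((Xor a u ↔ Xor b v) ∧ (Xor a u ↔ Xor c w))) ↔
      ((u ↔ v) → Xor u w → Xor a b) ∧ ((u ↔ w) → Xor u v → Xor a c) ∧
        ((v ↔ w) → Xor v u → Xor b c) := by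
  grind

/-- `G` distinguishes the edges `x y`, `x z` of every wedge of `U` or of `Uᶜ` whose closing
edge `y z` lies in the other graph. -/
def SeparatesOpenWedges (G U : SimpleGraph V) : Prop :=
  ∀ x y z, x ≠ y → x ≠ z → y ≠ z →
    (U.Adj x y ↔ U.Adj x z) → Xor (U.Adj x y) (U.Adj y z) → Xor (G.Adj x y) (G.Adj x z)

lemma sameHomog3_symmDiff_iff (G U : SimpleGraph V) :
    SameHomog3 G (G ∆ U) ↔ SeparatesOpenWedges G U := by
  simp only [sameHomog3_iff_forall_triangle, symmDiff_adj, homog_iff_homog_xor_iff]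
  constructor
  · exact fun h x y z hxy hxz hyz => (h x y z hxy hxz hyz).1
  · intro h x y z hxy hxz hyz
    refine ⟨h x y z hxy hxz hyz, ?_, ?_⟩
    · simpa only [G.adj_comm y x, U.adj_comm y x] using h y x z hxy.symm hyz hxz
    · simpa only [G.adj_comm z x, U.adj_comm z x, G.adj_comm z y, U.adj_comm z y]
        using h z x y hxz.symm hyz.symm hxy

lemma forall_not_edgeGraph_adj_iff (U : SimpleGraph V) (A : Set (Sym2 V)) :
    (∀ u v : U.edgeSet, (u : Sym2 V) ∈ A → (v : Sym2 V) ∈ A → ¬(edgeGraph U).Adj u v) ↔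
      ∀ x y z, y ≠ z → U.Adj x y → U.Adj x z → ¬U.Adj y z → ¬(s(x, y) ∈ A ∧ s(x, z) ∈ A) := by
  constructor
  · rintro h x y z hyz hxy hxz hn ⟨hyA, hzA⟩
    exact h ⟨s(x, y), hxy⟩ ⟨s(x, z), hxz⟩ hyA hzA ⟨x, y, z, hxy.ne, hxz.ne, hyz, rfl, rfl, hn⟩
  · rintro h ⟨u, hu⟩ ⟨v, hv⟩ huA hvA ⟨x, y, z, -, -, hyz, rfl, rfl, hn⟩
    exact h x y z hyz hu hv hn ⟨huA, hvA⟩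

lemma forall_not_edgeGraph_adj_inter_and_sdiff_iff (U G : SimpleGraph V) :
    ((∀ u v : U.edgeSet, (u : Sym2 V) ∈ U.edgeSet ∩ G.edgeSet →
        (v : Sym2 V) ∈ U.edgeSet ∩ G.edgeSet → ¬(edgeGraph U).Adj u v) ∧
      (∀ u v : U.edgeSet, (u : Sym2 V) ∈ U.edgeSet \ G.edgeSet →
        (v : Sym2 V) ∈ U.edgeSet \ G.edgeSet → ¬(edgeGraph U).Adj u v)) ↔
      ∀ x y z, y ≠ z → U.Adj x y → U.Adj x z → ¬U.Adj y z → Xor (G.Adj x y) (G.Adj x z) := by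
  rw [forall_not_edgeGraph_adj_iff, forall_not_edgeGraph_adj_iff]
  simp only [Set.mem_inter_iff, Set.mem_sdiff, mem_edgeSet]
  constructor
  · rintro ⟨h₁, h₂⟩ x y z hyz hxy hxz hn
    have := h₁ x y z hyz hxy hxz hn
    have := h₂ x y z hyz hxy hxz hn
    rw [xor_def]
    tauto
  · intro h
    constructor <;> intro x y z hyz hxy hxz hn <;> have := h x y z hyz hxy hxz hn <;>
      rw [xor_def] at this <;> tauto

lemma separatesOpenWedges_iff (G U : SimpleGraph V) :
    SeparatesOpenWedges G U ↔
      (∀ x y z, y ≠ z → U.Adj x y → U.Adj x z → ¬U.Adj y z → Xor (G.Adj x y) (G.Adj x z)) ∧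
      (∀ x y z, y ≠ z → Uᶜ.Adj x y → Uᶜ.Adj x z → ¬Uᶜ.Adj y z →
        Xor (G.Adj x y) (G.Adj x z)) := by
  simp only [compl_adj, not_and, not_not]
  constructor
  · intro h
    refine ⟨fun x y z hyz hxy hxz hn => ?_, fun x y z hyz hxy hxz hn => ?_⟩
    · exact h x y z hxy.ne hxz.ne hyz (iff_of_true hxy hxz) (Or.inl ⟨hxy, hn⟩)
    · exact h x y z hxy.1 hxz.1 hyz (iff_of_false hxy.2 hxz.2) (Or.inr ⟨hn hyz, hxy.2⟩)
  · rintro ⟨h, hc⟩ x y z hxy hxz hyz hU (⟨hxy', hn⟩ | ⟨hyz', hn⟩)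
    · exact h x y z hyz hxy' (hU.mp hxy') hn
    · exact hc x y z hyz ⟨hxy, hn⟩ ⟨hxz, mt hU.mpr hn⟩ fun _ => hyz'

end SimpleGraph

/-- Lemma 5, (a) ⇔ (c): `G` and `G'` have the same 3-element homogeneous subsets iff
`A₁ := E(U) ∩ E(G)` and `A₂ := E(U) \ E(G)` partition the vertex set of `S(U)` into two
independent sets, and `B₁ := E(Uᶜ) ∩ E(G)` and `B₂ := E(Uᶜ) \ E(G)` partition the vertex
set of `S(Uᶜ)` into two independent sets, where `U` is the Boolean sum of `G` and `G'`. -/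
theorem stmt_8 {V : Type*} (G G' : SimpleGraph V) (U : SimpleGraph V)
    (hU : U = booleanSum G G')
    (A1 A2 B1 B2 : Set (Sym2 V))
    (hA1 : A1 = U.edgeSet ∩ G.edgeSet) (hA2 : A2 = U.edgeSet \ G.edgeSet)
    (hB1 : B1 = Uᶜ.edgeSet ∩ G.edgeSet) (hB2 : B2 = Uᶜ.edgeSet \ G.edgeSet) :
    SameHomog3 G G' ↔
      ((A1 ∪ A2 = U.edgeSet ∧ A1 ∩ A2 = ∅ ∧
        (∀ u v : U.edgeSet, (u : Sym2 V) ∈ A1 → (v : Sym2 V) ∈ A1 →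
          ¬ (edgeGraph U).Adj u v) ∧
        (∀ u v : U.edgeSet, (u : Sym2 V) ∈ A2 → (v : Sym2 V) ∈ A2 →
          ¬ (edgeGraph U).Adj u v)) ∧
       (B1 ∪ B2 = Uᶜ.edgeSet ∧ B1 ∩ B2 = ∅ ∧
        (∀ u v : Uᶜ.edgeSet, (u : Sym2 V) ∈ B1 → (v : Sym2 V) ∈ B1 →
          ¬ (edgeGraph Uᶜ).Adj u v) ∧
        (∀ u v : Uᶜ.edgeSet, (u : Sym2 V) ∈ B2 → (v : Sym2 V) ∈ B2 →
          ¬ (edgeGraph Uᶜ).Adj u v))) := by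
  subst hA1 hA2 hB1 hB2
  have hG' : G' = G ∆ U := by rw [hU, booleanSum_eq_symmDiff, symmDiff_symmDiff_cancel_left]
  rw [hG', sameHomog3_symmDiff_iff, separatesOpenWedges_iff,
    forall_not_edgeGraph_adj_inter_and_sdiff_iff, forall_not_edgeGraph_adj_inter_and_sdiff_iff]
  have hdisj (A : Set (Sym2 V)) : A ∩ G.edgeSet ∩ (A \ G.edgeSet) = ∅ :=
    (Set.disjoint_sdiff_right.mono_left Set.inter_subset_right).inter_eq
  simp only [Set.inter_union_sdiff, hdisj, true_and]
end
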